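/- Let n ≥ 1, let a : ZMod n → R be a function into a commutative ring, and let P_0 be the 2n×2n block matrix fromBlocks 0 A (−Aᵀ) 0 with A(k,j) = a(k)δ_{k,j} − a(k)δ_{k,j-1} (indices mod n). Let C = ∏_i a(i) and let dC be the column vector whose first n entries are ∂C/∂a_k = ∏_{i≠k} a(i) and whose last n entries are 0. Then P_0 · dC = 0. -/

import Mathlib

open Matrix Finset

/-- Each column of `A` is `a j • (eⱼ - e_{σ j})`, so pairing it with `v` gives
`a j * v j - a (σ j) * v (σ j) = c - c`. -/
theorem transpose_mulVec_eq_zero_of_forall_mul_eq {ι R : Type*} [Fintype ι] [DecidableEq ι]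
    [CommRing R] (σ : ι → ι) (a v : ι → R) (c : R) (hv : ∀ k, a k * v k = c)
    (A : Matrix ι ι R)
    (hA : ∀ k j, A k j =
      a k * (if k = j then 1 else 0) - a k * (if k = σ j then 1 else 0)) :
    Aᵀ *ᵥ v = 0 := by
  funext j
  calc (Aᵀ *ᵥ v) j
      = ∑ k, (if k = j then a k * v k else 0) - ∑ k, (if k = σ j then a k * v k else 0) := by
        simp only [mulVec, dotProduct, transpose_apply, hA, ← sum_sub_distrib]
        refine sum_congr rfl fun k _ => ?_
        split_ifs <;> ring
    _ = a j * v j - a (σ j) * v (σ j) := by simp only [sum_ite_eq', mem_univ, if_true]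
    _ = 0 := by rw [hv, hv, sub_self]

/-- `C = ∏ a_i` is a Casimir of the linear Poisson structure `P₀` of the
closed Toda lattice in Flaschka coordinates: `P₀ · dC = 0`. -/
theorem stmt_14 {R : Type*} [CommRing R] (n : ℕ) [NeZero n]
    (a : ZMod n → R) (A : Matrix (ZMod n) (ZMod n) R)
    (hA : ∀ k j, A k j =
      a k * (if k = j then 1 else 0) - a k * (if k = j - 1 then 1 else 0)) :
    (fromBlocks 0 A (-Aᵀ) 0) *ᵥ
      (Sum.elim (fun k => ∏ i ∈ Finset.univ.erase k, a i) (0 : ZMod n → R)) = 0 := by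
  have hCasimir : Aᵀ *ᵥ (fun k => ∏ i ∈ univ.erase k, a i) = 0 :=
    transpose_mulVec_eq_zero_of_forall_mul_eq (· - 1) a _ (∏ i, a i)
      (fun k => mul_prod_erase _ a (mem_univ k)) A hA
  rw [fromBlocks_mulVec]
  simp [neg_mulVec, hCasimir]
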